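/- Let A be a real k×n matrix such that the linear map y ↦ Aᵀy, ℝ^k → ℝ^n, is surjective. Then for every x* ∈ ℝ^n, every w ∈ Sign(x*), and every λ > 0, there exists y ∈ ℝ^k with Aᵀy = w, and with b := λy + Ax*, the vector x* is a minimizer of x ↦ (1/2)‖Ax − b‖₂² + λ‖x‖₁ over ℝ^n. -/
import Mathlib


open Matrix Finset

/-- The Euclidean (2-)norm of a vector in `ℝ^m`. -/
noncomputable def l2norm {m : ℕ} (v : Fin m → ℝ) : ℝ := Real.sqrt (∑ i, (v i) ^ 2)

/-- The 1-norm of a vector in `ℝ^m`. -/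
def l1norm {m : ℕ} (v : Fin m → ℝ) : ℝ := ∑ i, |v i|

/-- The objective function of the problem (QP_λ): `x ↦ (1/2)‖Ax − b‖₂² + λ‖x‖₁`. -/
noncomputable def qpObj {k n : ℕ} (A : Matrix (Fin k) (Fin n) ℝ) (b : Fin k → ℝ)
    (lam : ℝ) (x : Fin n → ℝ) : ℝ :=
  (1 / 2) * (l2norm (A.mulVec x - b)) ^ 2 + lam * l1norm x

/-- `w ∈ Sign(x)`: the multivalued sign. -/
def inSign {n : ℕ} (w x : Fin n → ℝ) : Prop :=
  ∀ i, (0 < x i → w i = 1) ∧ (x i < 0 → w i = -1) ∧ (x i = 0 → |w i| ≤ 1)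

lemma sq_l2norm {m : ℕ} (v : Fin m → ℝ) : (l2norm v) ^ 2 = ∑ i, (v i) ^ 2 := by
  rw [l2norm, Real.sq_sqrt]
  exact Finset.sum_nonneg fun i _ => sq_nonneg _

/-- if `y ↦ Aᵀy` is surjective, then for every `x*`, every
`w ∈ Sign(x*)` and every `λ > 0` there is `y` with `Aᵀy = w` and, with
`b := λy + Ax*`, the vector `x*` minimizes the (QP_λ) objective. -/
theorem surjective_transpose_construction {k n : ℕ}
    (A : Matrix (Fin k) (Fin n) ℝ)
    (hsurj : Function.Surjective (fun y : Fin k → ℝ => Aᵀ.mulVec y)) :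
    ∀ (xs w : Fin n → ℝ), inSign w xs → ∀ lam : ℝ, 0 < lam →
      ∃ y : Fin k → ℝ, Aᵀ.mulVec y = w ∧
        ∀ x : Fin n → ℝ,
          qpObj A (lam • y + A.mulVec xs) lam xs ≤
            qpObj A (lam • y + A.mulVec xs) lam x := by
  intro xs w hw lam hlam
  obtain ⟨y, hy⟩ := hsurj w
  simp only at hy
  refine ⟨y, hy, fun x => ?_⟩
  set b : Fin k → ℝ := lam • y + A.mulVec xs with hb
  have hxs : A.mulVec xs - b = -(lam • y) := by
    simp [hb]
  have hx : A.mulVec x - b = A.mulVec (x - xs) - lam • y := by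
    simp [hb, Matrix.mulVec_sub]; abel
  -- key dot product identity
  have hdot : ∑ i, (A.mulVec (x - xs)) i * y i = ∑ j, (x j - xs j) * w j := by
    have key : (A.mulVec (x - xs)) ⬝ᵥ y = (x - xs) ⬝ᵥ w := by
      rw [dotProduct_comm, Matrix.dotProduct_mulVec, ← Matrix.mulVec_transpose, hy,
        dotProduct_comm]
    simpa only [dotProduct, Pi.sub_apply] using key
  -- pointwise bound
  have hpt : ∀ j, |xs j| + (x j - xs j) * w j ≤ |x j| := by
    intro j
    obtain ⟨h1, h2, h3⟩ := hw j
    have hw1 : |w j| ≤ 1 := by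
      rcases lt_trichotomy (xs j) 0 with h | h | h
      · rw [h2 h]; simp
      · exact h3 h
      · rw [h1 h]; simp
    have hws : w j * xs j = |xs j| := by
      rcases lt_trichotomy (xs j) 0 with h | h | h
      · rw [h2 h, abs_of_neg h]; ring
      · simp [h]
      · rw [h1 h, abs_of_pos h]; ring
    have hwx : w j * x j ≤ |x j| := by
      calc w j * x j ≤ |w j * x j| := le_abs_self _
        _ = |w j| * |x j| := abs_mul _ _
        _ ≤ 1 * |x j| := by nlinarith [abs_nonneg (x j)]
        _ = |x j| := one_mul _
    nlinarith
  have hsum : ∑ j, |xs j| + ∑ j, (x j - xs j) * w j ≤ ∑ j, |x j| := by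
    rw [← Finset.sum_add_distrib]
    exact Finset.sum_le_sum fun j _ => hpt j
  -- expand squares
  have hexp : ∑ i, ((A.mulVec x - b) i) ^ 2 =
      ∑ i, ((A.mulVec (x - xs)) i) ^ 2 - 2 * lam * ∑ i, (A.mulVec (x - xs)) i * y i
        + lam ^ 2 * ∑ i, (y i) ^ 2 := by
    rw [hx, Finset.mul_sum, Finset.mul_sum, ← Finset.sum_sub_distrib, ← Finset.sum_add_distrib]
    apply Finset.sum_congr rfl
    intro i _
    simp only [Pi.sub_apply, Pi.smul_apply, smul_eq_mul]
    ring
  have hexps : ∑ i, ((A.mulVec xs - b) i) ^ 2 = lam ^ 2 * ∑ i, (y i) ^ 2 := by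
    rw [hxs, Finset.mul_sum]
    apply Finset.sum_congr rfl
    intro i _
    simp only [Pi.neg_apply, Pi.smul_apply, smul_eq_mul]
    ring
  have hAv : (0:ℝ) ≤ ∑ i, ((A.mulVec (x - xs)) i) ^ 2 :=
    Finset.sum_nonneg fun i _ => sq_nonneg _
  simp only [qpObj, sq_l2norm, l1norm]
  rw [hexp, hexps, hdot]
  nlinarith [mul_le_mul_of_nonneg_left hsum hlam.le]
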